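/- Let 𝒮 and 𝒯 be the F-algebra antiautomorphisms of the Racah algebra ℜ with 𝒮: A ↦ B, B ↦ A, C ↦ C, D ↦ D and 𝒯: A ↦ B, B ↦ C, C ↦ A. Then 𝒮(Ω_A) = Ω_B, 𝒮(Ω_B) = Ω_A, 𝒮(Ω_C) = Ω_C, 𝒯(Ω_A) = Ω_B, 𝒯(Ω_B) = Ω_C, and 𝒯(Ω_C) = Ω_A; in particular the set {Ω_A, Ω_B, Ω_C} is invariant under 𝒮 and 𝒯. -/

import Mathlib

noncomputable section

/-- Generators of the Racah algebra. -/
inductive RGen : Type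
  | A | B | C | D

namespace Racah

variable (F : Type) [Field F]

/-- The free algebra on the generators `A`, `B`, `C`, `D`. -/
abbrev FA := FreeAlgebra F RGen

def fA : FA F := FreeAlgebra.ι F RGen.A
def fB : FA F := FreeAlgebra.ι F RGen.B
def fC : FA F := FreeAlgebra.ι F RGen.C
def fD : FA F := FreeAlgebra.ι F RGen.D

/-- α = [A,D] + AC − BA in the free algebra. -/
def fAl : FA F := (fA F * fD F - fD F * fA F) + fA F * fC F - fB F * fA F
/-- β = [B,D] + BA − CB in the free algebra. -/
def fBe : FA F := (fB F * fD F - fD F * fB F) + fB F * fA F - fC F * fB F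
/-- γ = [C,D] + CB − AC in the free algebra. -/
def fGa : FA F := (fC F * fD F - fD F * fC F) + fC F * fB F - fA F * fC F

/-- The defining relations of the Racah algebra:
`[A,B] = [B,C] = [C,A] = 2D` and each of `α`, `β`, `γ` commutes with each of `A`, `B`, `C`, `D`. -/
inductive Rel : FA F → FA F → Prop
  | AB : Rel (fA F * fB F - fB F * fA F) (2 * fD F)
  | BC : Rel (fB F * fC F - fC F * fB F) (2 * fD F)
  | CA : Rel (fC F * fA F - fA F * fC F) (2 * fD F)
  | cen (c x : FA F) (hc : c = fAl F ∨ c = fBe F ∨ c = fGa F)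
      (hx : x = fA F ∨ x = fB F ∨ x = fC F ∨ x = fD F) :
      Rel (c * x) (x * c)

/-- The Racah algebra ℜ. -/
abbrev R := RingQuot (Rel F)

def A : R F := RingQuot.mkAlgHom F (Rel F) (fA F)
def B : R F := RingQuot.mkAlgHom F (Rel F) (fB F)
def C : R F := RingQuot.mkAlgHom F (Rel F) (fC F)
def D : R F := RingQuot.mkAlgHom F (Rel F) (fD F)

/-- α = [A,D] + AC − BA. -/
def al : R F := (A F * D F - D F * A F) + A F * C F - B F * A F
/-- β = [B,D] + BA − CB. -/
def be : R F := (B F * D F - D F * B F) + B F * A F - C F * B F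
/-- γ = [C,D] + CB − AC. -/
def ga : R F := (C F * D F - D F * C F) + C F * B F - A F * C F
/-- δ = A + B + C. -/
def de : R F := A F + B F + C F

end Racah

namespace Racah

/-- An F-algebra antiautomorphism of ℜ: an F-linear bijection `f` with `f 1 = 1`
and `f (x*y) = f y * f x` for all `x`, `y`. -/
def IsAntiAut (F : Type) [Field F] (f : R F ≃ₗ[F] R F) : Prop :=
  f 1 = 1 ∧ ∀ x y : R F, f (x * y) = f y * f x

end Racah

namespace Racah

variable (F : Type) [Field F]

/-- Ω_A = D² + (BAC + CAB)/2 + A² + Bγ − Cβ − Aδ. -/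
def OmA : R F := D F ^ 2 + (2 : F)⁻¹ • (B F * A F * C F + C F * A F * B F) + A F ^ 2
  + B F * ga F - C F * be F - A F * de F

/-- Ω_B = D² + (CBA + ABC)/2 + B² + Cα − Aγ − Bδ. -/
def OmB : R F := D F ^ 2 + (2 : F)⁻¹ • (C F * B F * A F + A F * B F * C F) + B F ^ 2
  + C F * al F - A F * ga F - B F * de F

/-- Ω_C = D² + (ACB + BCA)/2 + C² + Aβ − Bα − Cδ. -/
def OmC : R F := D F ^ 2 + (2 : F)⁻¹ • (A F * C F * B F + B F * C F * A F) + C F ^ 2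
  + A F * be F - B F * al F - C F * de F

end Racah

/-
Each of `Ω_A`, `Ω_B`, `Ω_C` is `casimir x y z d u v e` for a suitable arrangement of the
generators and of `α, β, γ, δ`. An antimultiplicative linear map `f` sends this element to
`casimir` of the images, provided `f u`, `f v`, `f e` commute with `f y`, `f z`, `f x`; here
that is the centrality of `α, β, γ` together with `[δ, A] = [δ, B] = [δ, C] = 0`.
`𝒮` fixes `D`, `δ` and maps `α, β, γ` to `-β, -α, -γ`; `𝒯` fixes `δ` and maps `α, β, γ, D`
to `β, γ, α, -D`, where `𝒯 D = -D` comes from applying `𝒯` to `[A,B] = 2D` and dividing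
by `2`. The signs are absorbed because `casimir` is invariant under `d ↦ -d` and under
`(y, z, u, v) ↦ (z, y, -v, -u)`.
-/

namespace Racah

section Casimir

variable (F : Type*) [Field F] {R R' : Type*} [Ring R] [Algebra F R] [Ring R'] [Algebra F R']

def casimir (x y z d u v e : R) : R :=
  d ^ 2 + (2 : F)⁻¹ • (y * x * z + z * x * y) + x ^ 2 + y * u - z * v - x * e

theorem casimir_neg_d (x y z d u v e : R) :
    casimir F x y z (-d) u v e = casimir F x y z d u v e := by
  rw [casimir, casimir, neg_sq]

theorem casimir_swap (x y z d u v e : R) :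
    casimir F x z y d (-v) (-u) e = casimir F x y z d u v e := by
  simp only [casimir, mul_neg, sub_neg_eq_add, add_comm (z * x * y)]
  abel

variable {F} in
theorem map_casimir {G : Type*} [FunLike G R R'] [LinearMapClass G F R R'] (f : G)
    (hf : ∀ a b, f (a * b) = f b * f a) {x y z d u v e : R}
    (hu : Commute (f u) (f y)) (hv : Commute (f v) (f z)) (he : Commute (f e) (f x)) :
    f (casimir F x y z d u v e) = casimir F (f x) (f y) (f z) (f d) (f u) (f v) (f e) := by
  simp only [casimir, pow_two, map_add, map_sub, map_smul, hf, hu.eq, hv.eq, he.eq, mul_assoc,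
    add_comm (f z * _)]

end Casimir

variable (F : Type) [Field F]

theorem OmA_eq_casimir : OmA F = casimir F (A F) (B F) (C F) (D F) (ga F) (be F) (de F) := rfl
theorem OmB_eq_casimir : OmB F = casimir F (B F) (C F) (A F) (D F) (al F) (ga F) (de F) := rfl
theorem OmC_eq_casimir : OmC F = casimir F (C F) (A F) (B F) (D F) (be F) (al F) (de F) := rfl

theorem A_mul_B_sub : A F * B F - B F * A F = 2 * D F := by
  simpa only [map_sub, map_mul, map_ofNat, A, B, D] using RingQuot.mkAlgHom_rel F (Rel.AB (F := F))

theorem B_mul_C_sub : B F * C F - C F * B F = 2 * D F := by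
  simpa only [map_sub, map_mul, map_ofNat, B, C, D] using RingQuot.mkAlgHom_rel F (Rel.BC (F := F))

theorem C_mul_A_sub : C F * A F - A F * C F = 2 * D F := by
  simpa only [map_sub, map_mul, map_ofNat, A, C, D] using RingQuot.mkAlgHom_rel F (Rel.CA (F := F))

variable {F} in
theorem commute_of_rel {c x : FA F} (hc : c = fAl F ∨ c = fBe F ∨ c = fGa F)
    (hx : x = fA F ∨ x = fB F ∨ x = fC F ∨ x = fD F) :
    Commute (RingQuot.mkAlgHom F (Rel F) c) (RingQuot.mkAlgHom F (Rel F) x) := by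
  simpa only [map_mul, commute_iff_eq] using RingQuot.mkAlgHom_rel F (Rel.cen c x hc hx)

theorem mkAlgHom_fAl : RingQuot.mkAlgHom F (Rel F) (fAl F) = al F := by
  simp only [fAl, al, A, B, C, D, map_sub, map_add, map_mul]

theorem mkAlgHom_fBe : RingQuot.mkAlgHom F (Rel F) (fBe F) = be F := by
  simp only [fBe, be, A, B, C, D, map_sub, map_add, map_mul]

theorem mkAlgHom_fGa : RingQuot.mkAlgHom F (Rel F) (fGa F) = ga F := by
  simp only [fGa, ga, A, B, C, D, map_sub, map_add, map_mul]

theorem commute_al_B : Commute (al F) (B F) := by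
  rw [← mkAlgHom_fAl]
  exact commute_of_rel (Or.inl rfl) (Or.inr (Or.inl rfl))

theorem commute_al_C : Commute (al F) (C F) := by
  rw [← mkAlgHom_fAl]
  exact commute_of_rel (Or.inl rfl) (Or.inr (Or.inr (Or.inl rfl)))

theorem commute_be_A : Commute (be F) (A F) := by
  rw [← mkAlgHom_fBe]
  exact commute_of_rel (Or.inr (Or.inl rfl)) (Or.inl rfl)

theorem commute_be_C : Commute (be F) (C F) := by
  rw [← mkAlgHom_fBe]
  exact commute_of_rel (Or.inr (Or.inl rfl)) (Or.inr (Or.inr (Or.inl rfl)))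

theorem commute_ga_A : Commute (ga F) (A F) := by
  rw [← mkAlgHom_fGa]
  exact commute_of_rel (Or.inr (Or.inr rfl)) (Or.inl rfl)

theorem commute_ga_B : Commute (ga F) (B F) := by
  rw [← mkAlgHom_fGa]
  exact commute_of_rel (Or.inr (Or.inr rfl)) (Or.inr (Or.inl rfl))

theorem commute_de_A : Commute (de F) (A F) := by
  rw [Commute, SemiconjBy, de]
  linear_combination (norm := noncomm_ring) C_mul_A_sub F - A_mul_B_sub F

theorem commute_de_B : Commute (de F) (B F) := by
  rw [Commute, SemiconjBy, de]
  linear_combination (norm := noncomm_ring) A_mul_B_sub F - B_mul_C_sub F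

theorem commute_de_C : Commute (de F) (C F) := by
  rw [Commute, SemiconjBy, de]
  linear_combination (norm := noncomm_ring) B_mul_C_sub F - C_mul_A_sub F

section AntiAut

variable {G : Type*} [FunLike G (R F) (R F)] [LinearMapClass G F (R F) (R F)]

theorem map_al_be_ga_de_of_swap {f : G} (hf : ∀ x y, f (x * y) = f y * f x)
    (hA : f (A F) = B F) (hB : f (B F) = A F) (hC : f (C F) = C F) (hD : f (D F) = D F) :
    f (al F) = -be F ∧ f (be F) = -al F ∧ f (ga F) = -ga F ∧ f (de F) = de F := by
  simp only [al, be, ga, de, map_sub, map_add, hf, hA, hB, hC, hD]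
  exact ⟨by noncomm_ring, by noncomm_ring, by noncomm_ring, by abel⟩

theorem map_D_of_cycle (h2 : (2 : F) ≠ 0) {f : G} (hf : ∀ x y, f (x * y) = f y * f x)
    (hA : f (A F) = B F) (hB : f (B F) = C F) :
    f (D F) = -D F := by
  have h : (2 : F) • (f (D F) + D F) = 0 := by
    have := congrArg f (A_mul_B_sub F)
    rw [map_sub, hf, hf, hA, hB, two_mul, map_add] at this
    rw [two_smul]
    linear_combination (norm := noncomm_ring) -this - B_mul_C_sub F
  exact eq_neg_of_add_eq_zero_left ((smul_eq_zero.mp h).resolve_left h2)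

theorem map_al_be_ga_de_of_cycle {f : G} (hf : ∀ x y, f (x * y) = f y * f x)
    (hA : f (A F) = B F) (hB : f (B F) = C F) (hC : f (C F) = A F) (hD : f (D F) = -D F) :
    f (al F) = be F ∧ f (be F) = ga F ∧ f (ga F) = al F ∧ f (de F) = de F := by
  -- `noncomm_ring` cannot normalise `-D F * _` in `R F` (its `Neg` and `Mul` instances reach
  -- `FreeAlgebra` along different paths), so `f D = -D` is fed to it as `f D + D = 0`.
  have hD' : f (D F) + D F = 0 := by rw [hD, neg_add_cancel]
  simp only [al, be, ga, de, map_sub, map_add, hf, hA, hB, hC]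
  refine ⟨?_, ?_, ?_, by abel⟩
  · linear_combination (norm := noncomm_ring)
      hD' * B F - B F * hD' + A_mul_B_sub F - B_mul_C_sub F
  · linear_combination (norm := noncomm_ring)
      hD' * C F - C F * hD' + B_mul_C_sub F - C_mul_A_sub F
  · linear_combination (norm := noncomm_ring)
      hD' * A F - A F * hD' + C_mul_A_sub F - A_mul_B_sub F

theorem map_OmA_OmB_OmC_of_swap {f : G} (hf : ∀ x y, f (x * y) = f y * f x)
    (hA : f (A F) = B F) (hB : f (B F) = A F) (hC : f (C F) = C F) (hD : f (D F) = D F) :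
    f (OmA F) = OmB F ∧ f (OmB F) = OmA F ∧ f (OmC F) = OmC F := by
  obtain ⟨hal, hbe, hga, hde⟩ := map_al_be_ga_de_of_swap F hf hA hB hC hD
  refine ⟨?_, ?_, ?_⟩
  · rw [OmA_eq_casimir, OmB_eq_casimir]
    simp only [map_casimir f hf, casimir_swap, hA, hB, hC, hD, hbe, hga, hde,
      (commute_ga_A F).neg_left, (commute_al_C F).neg_left, commute_de_B]
  · rw [OmB_eq_casimir, OmA_eq_casimir]
    simp only [map_casimir f hf, casimir_swap, hA, hB, hC, hD, hal, hga, hde,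
      (commute_be_C F).neg_left, (commute_ga_B F).neg_left, commute_de_A]
  · rw [OmC_eq_casimir]
    simp only [map_casimir f hf, casimir_swap, hA, hB, hC, hD, hal, hbe, hde,
      (commute_al_B F).neg_left, (commute_be_A F).neg_left, commute_de_C]

theorem map_OmA_OmB_OmC_of_cycle {f : G} (hf : ∀ x y, f (x * y) = f y * f x)
    (hA : f (A F) = B F) (hB : f (B F) = C F) (hC : f (C F) = A F) (hD : f (D F) = -D F) :
    f (OmA F) = OmB F ∧ f (OmB F) = OmC F ∧ f (OmC F) = OmA F := by
  obtain ⟨hal, hbe, hga, hde⟩ := map_al_be_ga_de_of_cycle F hf hA hB hC hD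
  refine ⟨?_, ?_, ?_⟩
  · rw [OmA_eq_casimir, OmB_eq_casimir]
    simp only [map_casimir f hf, casimir_neg_d, hA, hB, hC, hD, hbe, hga, hde,
      commute_al_C, commute_ga_A, commute_de_B]
  · rw [OmB_eq_casimir, OmC_eq_casimir]
    simp only [map_casimir f hf, casimir_neg_d, hA, hB, hC, hD, hal, hga, hde,
      commute_be_A, commute_al_B, commute_de_C]
  · rw [OmC_eq_casimir, OmA_eq_casimir]
    simp only [map_casimir f hf, casimir_neg_d, hA, hB, hC, hD, hal, hbe, hde,
      commute_ga_B, commute_be_C, commute_de_A]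

end AntiAut

end Racah

open Racah in
/-- 𝒮(Ω_A) = Ω_B, 𝒮(Ω_B) = Ω_A, 𝒮(Ω_C) = Ω_C, 𝒯(Ω_A) = Ω_B, 𝒯(Ω_B) = Ω_C,
𝒯(Ω_C) = Ω_A; in particular {Ω_A, Ω_B, Ω_C} is invariant under 𝒮 and 𝒯. -/
theorem stmt7 (F : Type) [Field F] (h2 : (2 : F) ≠ 0)
    (S T : Racah.R F ≃ₗ[F] Racah.R F)
    (hS : IsAntiAut F S ∧ S (Racah.A F) = Racah.B F ∧ S (Racah.B F) = Racah.A F ∧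
      S (Racah.C F) = Racah.C F ∧ S (Racah.D F) = Racah.D F)
    (hT : IsAntiAut F T ∧ T (Racah.A F) = Racah.B F ∧ T (Racah.B F) = Racah.C F ∧
      T (Racah.C F) = Racah.A F) :
    S (OmA F) = OmB F ∧ S (OmB F) = OmA F ∧ S (OmC F) = OmC F ∧
    T (OmA F) = OmB F ∧ T (OmB F) = OmC F ∧ T (OmC F) = OmA F ∧
    S '' {OmA F, OmB F, OmC F} = {OmA F, OmB F, OmC F} ∧
    T '' {OmA F, OmB F, OmC F} = {OmA F, OmB F, OmC F} := by
  obtain ⟨⟨-, hS_mul⟩, hSA, hSB, hSC, hSD⟩ := hS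
  obtain ⟨⟨-, hT_mul⟩, hTA, hTB, hTC⟩ := hT
  have hTD := map_D_of_cycle F h2 hT_mul hTA hTB
  obtain ⟨hSA', hSB', hSC'⟩ := map_OmA_OmB_OmC_of_swap F hS_mul hSA hSB hSC hSD
  obtain ⟨hTA', hTB', hTC'⟩ := map_OmA_OmB_OmC_of_cycle F hT_mul hTA hTB hTC hTD
  refine ⟨hSA', hSB', hSC', hTA', hTB', hTC', ?_, ?_⟩
  · rw [Set.image_insert_eq, Set.image_insert_eq, Set.image_singleton, hSA', hSB', hSC',
      Set.insert_comm]
  · rw [Set.image_insert_eq, Set.image_insert_eq, Set.image_singleton, hTA', hTB', hTC',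
      Set.pair_comm (OmC F), Set.insert_comm]
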